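/- Let S be a generalized double circle and let p, q ∈ S be neighbors (endpoints of an edge of the spanning cycle formed by the concave chains). If x ∈ S is such that the open triangle with vertices p, q, x contains a point of S, then at least one of p, q is an extreme point of S. -/

import Mathlib

open scoped Classical

noncomputable section

abbrev Pt : Type := ℝ × ℝ

/-- default point -/
def pd : Pt := (0, 0)

/-- No three distinct points of `S` are collinear. -/
def GenPos (S : Finset Pt) : Prop :=
  ∀ p ∈ S, ∀ q ∈ S, ∀ r ∈ S, p ≠ q → p ≠ r → q ≠ r →
    ¬ Collinear ℝ ({p, q, r} : Set Pt)

/-- The (ordered) edges of a path given as a list of vertices. -/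
def pathEdges (l : List Pt) : List (Pt × Pt) := l.zip l.tail

/-- The (ordered) edges of a cycle given as a list of vertices. -/
def cycleEdges (l : List Pt) : List (Pt × Pt) := l.zip (l.rotate 1)

/-- A family of straight-line segments is pairwise non-crossing:
the open segments of any two distinct members are disjoint. -/
def NonCrossing (E : List (Pt × Pt)) : Prop :=
  E.Pairwise fun e f => openSegment ℝ e.1 e.2 ∩ openSegment ℝ f.1 f.2 = ∅

/-- `l` is a plane (crossing-free) straight-line spanning path of `S`. -/
def IsPlanePath (S : Finset Pt) (l : List Pt) : Prop :=
  l.Nodup ∧ l.toFinset = S ∧ NonCrossing (pathEdges l)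

/-- `l` is a plane straight-line spanning cycle of `S`. -/
def IsPlaneCycle (S : Finset Pt) (l : List Pt) : Prop :=
  3 ≤ l.length ∧ l.Nodup ∧ l.toFinset = S ∧ NonCrossing (cycleEdges l)

/-- The set of edges of a path, as unordered pairs. -/
def edgeSet (l : List Pt) : Finset (Sym2 Pt) :=
  ((pathEdges l).map fun e => s(e.1, e.2)).toFinset

/-- The set of edges of a cycle, as unordered pairs. -/
def cycleEdgeSet (l : List Pt) : Finset (Sym2 Pt) :=
  ((cycleEdges l).map fun e => s(e.1, e.2)).toFinset

/-- No segment joining two points of `S` crosses any edge of the cycle `l`. -/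
def UncrossedCycle (S : Finset Pt) (l : List Pt) : Prop :=
  ∀ a ∈ S, ∀ b ∈ S, a ≠ b → ∀ e ∈ cycleEdges l, s(a, b) ≠ s(e.1, e.2) →
    openSegment ℝ a b ∩ openSegment ℝ e.1 e.2 = ∅

/-- Two plane spanning paths of `S` differ by a single flip. -/
def FlipAdj (S : Finset Pt) (P Q : List Pt) : Prop :=
  IsPlanePath S P ∧ IsPlanePath S Q ∧
    ∃ e f, e ≠ f ∧ e ∈ edgeSet P ∧ f ∈ edgeSet Q ∧
      (edgeSet P).erase e = (edgeSet Q).erase f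

/-- There is a sequence of `k` flips from `P` to (a representative of) `Q`, all of whose
members are plane spanning paths of `S` satisfying the additional property `A`. -/
def FlipSeq (S : Finset Pt) (A : List Pt → Prop) (k : ℕ) (P Q : List Pt) : Prop :=
  ∃ f : ℕ → List Pt, f 0 = P ∧ edgeSet (f k) = edgeSet Q ∧
    (∀ i ≤ k, IsPlanePath S (f i) ∧ A (f i)) ∧
    ∀ i < k, FlipAdj S (f i) (f (i + 1))

/-- The flip graph on the plane spanning paths of `S` satisfying `A` is connected. -/
def FlipConnected (S : Finset Pt) (A : List Pt → Prop) : Prop :=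
  ∀ P Q : List Pt, IsPlanePath S P → A P → IsPlanePath S Q → A Q →
    ∃ k, FlipSeq S A k P Q

/-- `uv` is an edge of the boundary of the convex hull of `S`. -/
def HullEdge (S : Finset Pt) (u v : Pt) : Prop :=
  u ∈ S ∧ v ∈ S ∧ u ≠ v ∧ segment ℝ u v ⊆ frontier (convexHull ℝ (S : Set Pt))

/-- `p` is an extreme point (a vertex of the convex hull) of `S`. -/
def ExtremePt (S : Finset Pt) (p : Pt) : Prop :=
  p ∈ S ∧ p ∉ convexHull ℝ ((S.erase p : Finset Pt) : Set Pt)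

/-- `p` is a point of `S` lying strictly in the interior of the convex hull of `S`. -/
def InteriorPt (S : Finset Pt) (p : Pt) : Prop :=
  p ∈ S ∧ p ∈ interior (convexHull ℝ (S : Set Pt))

/-- Twice the signed area of the triangle `a b c` (orientation test). -/
def sign3 (a b c : Pt) : ℝ :=
  (b.1 - a.1) * (c.2 - a.2) - (b.2 - a.2) * (c.1 - a.1)

/-- A finite point set is in convex position. -/
def ConvexPos (C : Finset Pt) : Prop :=
  ∀ x ∈ C, x ∉ convexHull ℝ ((C.erase x : Finset Pt) : Set Pt)

/-- `C` is a concave chain of `S` between the extreme points `p` and `q`: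
`C` is in convex position, contains no extreme points of `S` other than `p, q`,
and every line through two points of `C` has all of `S \ C` strictly inside the
open halfplane containing neither `p` nor `q`. -/
def IsConcaveChain (S C : Finset Pt) (p q : Pt) : Prop :=
  C ⊆ S ∧ p ∈ C ∧ q ∈ C ∧ p ≠ q ∧ ExtremePt S p ∧ ExtremePt S q ∧
  ConvexPos C ∧
  (∀ x ∈ C, ExtremePt S x → x = p ∨ x = q) ∧
  ∀ x ∈ C, ∀ y ∈ C, x ≠ y → ∀ z ∈ S, z ∉ C →
    sign3 x y z ≠ 0 ∧ sign3 x y z * sign3 x y p ≤ 0 ∧ sign3 x y z * sign3 x y q ≤ 0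

/-- A generalized double circle structure on `S`: a family of concave chains such
that every interior point of `S` lies on exactly one chain and every extreme
point of `S` lies on exactly two chains. -/
structure GDCOn (S : Finset Pt) where
  chains : Finset (Finset Pt)
  chains_concave : ∀ C ∈ chains, ∃ p q, IsConcaveChain S C p q
  interior_mem : ∀ x ∈ S, ¬ ExtremePt S x → (chains.filter fun C => x ∈ C).card = 1
  extreme_mem : ∀ x ∈ S, ExtremePt S x → (chains.filter fun C => x ∈ C).card = 2

/-- `xy` is an edge of the hull-boundary path of the chain `C` from `p` to `q`
(an edge of the convex hull boundary of `C` other than the closing edge `pq`,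
unless the chain consists of `p` and `q` only). -/
def ChainEdge (C : Finset Pt) (p q x y : Pt) : Prop :=
  x ∈ C ∧ y ∈ C ∧ x ≠ y ∧
  segment ℝ x y ⊆ frontier (convexHull ℝ (C : Set Pt)) ∧
  (C.card ≤ 2 ∨ s(x, y) ≠ s(p, q))

/-- `u` and `v` are neighbors: consecutive along the spanning cycle formed by
the concave chains of the generalized double circle `g`. -/
def GDCNeighbors {S : Finset Pt} (g : GDCOn S) (u v : Pt) : Prop :=
  ∃ C ∈ g.chains, ∃ p q, IsConcaveChain S C p q ∧ ChainEdge C p q u v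

lemma halfplaneKey (c1 c2 : ℝ) (hc : ¬ (c1 = 0 ∧ c2 = 0)) (p q x y : Pt)
    (hp : c1*p.1+c2*p.2 ≤ c1*y.1+c2*y.2)
    (hq : c1*q.1+c2*q.2 ≤ c1*y.1+c2*y.2)
    (hx : c1*x.1+c2*x.2 ≤ c1*y.1+c2*y.2) :
    y ∉ interior (convexHull ℝ ({p, q, x} : Set Pt)) := by
  intro hy
  have hlin : IsLinearMap ℝ (fun z : Pt => c1*z.1+c2*z.2) := by
    constructor
    · intro a b; simp [Prod.fst_add, Prod.snd_add]; ring
    · intro c a; simp [smul_eq_mul]; ring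
  have hsub : convexHull ℝ ({p, q, x} : Set Pt) ⊆ {z : Pt | c1*z.1+c2*z.2 ≤ c1*y.1+c2*y.2} := by
    apply convexHull_min
    · intro z hz
      rcases hz with rfl | rfl | rfl <;> assumption
    · exact convex_halfSpace_le hlin _
  obtain ⟨ε, hε, hball⟩ := Metric.mem_nhds_iff.mp (mem_interior_iff_mem_nhds.mp hy)
  have hvne : ((c1, c2) : Pt) ≠ 0 := by
    simp only [Prod.ext_iff, Prod.fst_zero, Prod.snd_zero, ne_eq]
    tauto
  have hnorm : (0:ℝ) < ‖((c1, c2) : Pt)‖ := norm_pos_iff.mpr hvne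
  set t : ℝ := ε / (2 * ‖((c1, c2) : Pt)‖) with ht_def
  have ht : 0 < t := by positivity
  set w : Pt := y + t • ((c1, c2) : Pt) with hw_def
  have hwball : w ∈ Metric.ball y ε := by
    have : dist w y = t * ‖((c1, c2) : Pt)‖ := by
      rw [dist_eq_norm, hw_def, add_sub_cancel_left, norm_smul]
      simp [abs_of_pos ht]
    have h2 : t * ‖((c1, c2) : Pt)‖ = ε / 2 := by
      rw [ht_def]; field_simp
    rw [Metric.mem_ball, this, h2]
    linarith
  have hmem := hsub (hball hwball)
  have hfw : c1*w.1+c2*w.2 = c1*y.1+c2*y.2 + t * (c1^2 + c2^2) := by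
    simp [hw_def, smul_eq_mul]
    ring
  have hcc : 0 < c1^2 + c2^2 := by
    rcases not_and_or.mp hc with h | h <;> positivity
  rw [Set.mem_setOf_eq, hfw] at hmem
  nlinarith

lemma clmKey (f : Pt →L[ℝ] ℝ) (v p q x y : Pt) (hv : f v ≠ 0)
    (hp : f p ≤ f y) (hq : f q ≤ f y) (hx : f x ≤ f y) :
    y ∉ interior (convexHull ℝ ({p, q, x} : Set Pt)) := by
  have hrep : ∀ z : Pt, f z = f (1,0) * z.1 + f (0,1) * z.2 := by
    intro z
    have hz : z = z.1 • ((1:ℝ),(0:ℝ)) + z.2 • ((0:ℝ),(1:ℝ)) := by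
      ext <;> simp
    calc f z = f (z.1 • ((1:ℝ),(0:ℝ)) + z.2 • ((0:ℝ),(1:ℝ))) := by rw [← hz]
    _ = f (1,0) * z.1 + f (0,1) * z.2 := by
        rw [map_add, map_smul, map_smul]; simp [smul_eq_mul]; ring
  apply halfplaneKey (f (1,0)) (f (0,1))
  · rintro ⟨h1, h2⟩
    apply hv
    rw [hrep v, h1, h2]; ring
  · rw [← hrep p, ← hrep y]; exact hp
  · rw [← hrep q, ← hrep y]; exact hq
  · rw [← hrep x, ← hrep y]; exact hx

lemma triKey (p q x y a : Pt) (s : ℝ) (hs : s ≠ 0) (hay : a ≠ y)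
    (hp : s * sign3 y a p ≤ 0) (hq : s * sign3 y a q ≤ 0) (hx : s * sign3 y a x ≤ 0) :
    y ∉ interior (convexHull ℝ ({p, q, x} : Set Pt)) := by
  apply halfplaneKey (-s*(a.2-y.2)) (s*(a.1-y.1))
  · rintro ⟨h1, h2⟩
    rcases Prod.ext_iff.not.mp hay with h
    have ha1 : a.1 - y.1 = 0 := by
      rcases mul_eq_zero.mp h2 with h' | h'
      · exact absurd h' hs
      · exact h'
    have ha2 : a.2 - y.2 = 0 := by
      rcases mul_eq_zero.mp h1 with h' | h'
      · exact absurd (by linarith [neg_eq_zero.mp (by linarith : -s = 0)] : s = 0) hs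
      · exact h'
    exact hay (by ext <;> [linarith; linarith])
  · have h := hp; simp only [sign3] at h; nlinarith [h]
  · have h := hq; simp only [sign3] at h; nlinarith [h]
  · have h := hx; simp only [sign3] at h; nlinarith [h]

lemma sign3_self (a b : Pt) : sign3 a b b = 0 := by simp [sign3]; ring

lemma collinear_of_sign3 (p q r : Pt) (hpq : p ≠ q) (h : sign3 p q r = 0) :
    Collinear ℝ ({p, q, r} : Set Pt) := by
  rw [collinear_iff_of_mem (Set.mem_insert p {q, r})]
  refine ⟨q - p, ?_⟩
  intro z hz
  rcases hz with rfl | rfl | rfl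
  · exact ⟨0, by simp⟩
  · exact ⟨1, by simp⟩
  · simp only [sign3] at h
    by_cases h1 : q.1 - p.1 = 0
    · have h2 : q.2 - p.2 ≠ 0 := by
        intro h2; apply hpq; ext <;> [linarith; linarith]
      have hz1 : z.1 - p.1 = 0 := by
        rcases mul_eq_zero.mp (by linear_combination (z.2 - p.2) * h1 - h :
            (q.2 - p.2) * (z.1 - p.1) = 0) with h' | h'
        · exact absurd h' h2
        · exact h'
      refine ⟨(z.2 - p.2)/(q.2 - p.2), ?_⟩
      ext
      · simp only [vadd_eq_add, Prod.fst_add, Prod.smul_fst, Prod.fst_sub, smul_eq_mul]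
        rw [h1]; linarith
      · simp only [vadd_eq_add, Prod.snd_add, Prod.smul_snd, Prod.snd_sub, smul_eq_mul]
        field_simp
        ring
    · refine ⟨(z.1 - p.1)/(q.1 - p.1), ?_⟩
      ext
      · simp only [vadd_eq_add, Prod.fst_add, Prod.smul_fst, Prod.fst_sub, smul_eq_mul]
        field_simp
        ring
      · simp only [vadd_eq_add, Prod.snd_add, Prod.smul_snd, Prod.snd_sub, smul_eq_mul]
        field_simp
        linarith [h]

lemma sign3_of_segment (p q z : Pt) (h : z ∈ segment ℝ p q) : sign3 p q z = 0 := by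
  obtain ⟨a, b, ha, hb, hab, habz⟩ := h
  have h1 : z.1 = a * p.1 + b * q.1 := by rw [← habz]; simp [smul_eq_mul]
  have h2 : z.2 = a * p.2 + b * q.2 := by rw [← habz]; simp [smul_eq_mul]
  simp only [sign3, h1, h2]
  have : a = 1 - b := by linarith
  rw [this]; ring

lemma convex_sign3_halfplane (u v : Pt) (k : ℝ) :
    Convex ℝ {z : Pt | 0 ≤ k * sign3 u v z} := by
  have : {z : Pt | 0 ≤ k * sign3 u v z} =
      {z : Pt | (k*(v.2-u.2)) * z.1 + (-k*(v.1-u.1)) * z.2 ≤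
        k*((v.1-u.1)*(-u.2) - (v.2-u.2)*(-u.1))} := by
    ext z; simp only [Set.mem_setOf_eq, sign3]; constructor <;> intro h <;> nlinarith
  rw [this]
  exact convex_halfSpace_le ⟨fun a b => by simp [Prod.fst_add, Prod.snd_add]; ring,
    fun c a => by simp [smul_eq_mul]; ring⟩ _


lemma sign3_left (a b : Pt) : sign3 a b a = 0 := by simp [sign3]

lemma clm_rep (f : Pt →L[ℝ] ℝ) (z : Pt) : f z = f (1,0) * z.1 + f (0,1) * z.2 := by
  have hz : z = z.1 • ((1:ℝ),(0:ℝ)) + z.2 • ((0:ℝ),(1:ℝ)) := by ext <;> simp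
  calc f z = f (z.1 • ((1:ℝ),(0:ℝ)) + z.2 • ((0:ℝ),(1:ℝ))) := by rw [← hz]
  _ = f (1,0) * z.1 + f (0,1) * z.2 := by
      rw [map_add, map_smul, map_smul]; simp [smul_eq_mul]; ring

lemma sepKey (a b y : Pt) (hy : y ∉ convexHull ℝ ({a, b} : Set Pt)) :
    ∃ f : Pt →L[ℝ] ℝ, f a ≤ f y ∧ f b ≤ f y ∧ f a ≠ f y := by
  obtain ⟨f, u, hfy, hfb⟩ := geometric_hahn_banach_point_closed (convex_convexHull ℝ _)
    ((Set.toFinite ({a, b} : Set Pt)).isCompact_convexHull ℝ).isClosed hy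
  have ha := hfb a (subset_convexHull ℝ _ (by simp))
  have hb := hfb b (subset_convexHull ℝ _ (by simp))
  refine ⟨-f, by simpa using le_of_lt (by linarith), by simpa using le_of_lt (by linarith), ?_⟩
  simp only [ContinuousLinearMap.neg_apply, ne_eq, neg_inj]
  intro h; linarith


set_option maxHeartbeats 2000000 in
/-- In a generalized double circle, if `p, q` are neighbors along the spanning
cycle formed by the chains and the open triangle `pqx` contains a point of `S`,
then `p` or `q` is an extreme point of `S`. -/
theorem stmt_10 (S : Finset Pt) (hgp : GenPos S) (g : GDCOn S)
    (p q : Pt) (hnb : GDCNeighbors g p q) (x : Pt) (hx : x ∈ S)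
    (y : Pt) (hy : y ∈ S)
    (hytri : y ∈ interior (convexHull ℝ ({p, q, x} : Set Pt))) :
    ExtremePt S p ∨ ExtremePt S q := by
  by_contra hcon
  push_neg at hcon
  obtain ⟨hpne, hqne⟩ := hcon
  obtain ⟨C, hCmem, p0, q0, hchain, hedge⟩ := hnb
  obtain ⟨hCsub, hp0C, hq0C, hp0q0, hp0ext, hq0ext, hconv, hextC, hlines⟩ := hchain
  obtain ⟨hpC, hqC, hpq, hfront, -⟩ := hedge
  have hpS : p ∈ S := hCsub hpC
  have hqS : q ∈ S := hCsub hqC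
  have hgp3 : ∀ a ∈ S, ∀ b ∈ S, ∀ c ∈ S, a ≠ b → a ≠ c → b ≠ c → sign3 a b c ≠ 0 := by
    intro a ha b hb c hc hab hac hbc h0
    exact hgp a ha b hb c hc hab hac hbc (collinear_of_sign3 a b c hab h0)
  -- Case 0 : y coincides with a vertex of the triangle
  by_cases hyp : y = p
  · subst hyp
    by_cases hpseg : y ∈ convexHull ℝ ({q, x} : Set Pt)
    · rw [convexHull_pair] at hpseg
      by_cases hqx : q = x
      · subst hqx
        rw [segment_same] at hpseg
        exact hpq hpseg
      · by_cases hpx : y = x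
        · refine absurd hytri (halfplaneKey (y.1 - q.1) (y.2 - q.2) ?_ y q x y le_rfl ?_ ?_)
          · rintro ⟨h1, h2⟩; exact hpq (by ext <;> [linarith; linarith])
          · nlinarith [sq_nonneg (y.1 - q.1), sq_nonneg (y.2 - q.2)]
          · rw [← hpx]
        · exact absurd (collinear_of_sign3 q x y hqx (sign3_of_segment q x y hpseg))
            (hgp q hqS x hx y hpS hqx (fun h => hpq h.symm) (fun h => hpx h.symm))
    · obtain ⟨f, hfa, hfb, hfne⟩ := sepKey q x y hpseg
      refine absurd hytri (clmKey f (q - y) y q x y ?_ le_rfl hfa hfb)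
      rw [map_sub]; intro h; exact hfne (by linarith)
  · by_cases hyq : y = q
    · subst hyq
      by_cases hpseg : y ∈ convexHull ℝ ({p, x} : Set Pt)
      · rw [convexHull_pair] at hpseg
        by_cases hqx : p = x
        · subst hqx
          rw [segment_same] at hpseg
          exact hpq hpseg.symm
        · by_cases hpx : y = x
          · refine absurd hytri (halfplaneKey (y.1 - p.1) (y.2 - p.2) ?_ p y x y ?_ le_rfl ?_)
            · rintro ⟨h1, h2⟩; exact hpq (by ext <;> [linarith; linarith])
            · nlinarith [sq_nonneg (y.1 - p.1), sq_nonneg (y.2 - p.2)]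
            · rw [← hpx]
          · exact absurd (collinear_of_sign3 p x y hqx (sign3_of_segment p x y hpseg))
              (hgp p hpS x hx y hqS hqx (fun h => hpq h) (fun h => hpx h.symm))
      · obtain ⟨f, hfa, hfb, hfne⟩ := sepKey p x y hpseg
        refine absurd hytri (clmKey f (p - y) p y x y ?_ hfa le_rfl hfb)
        rw [map_sub]; intro h; exact hfne (by linarith)
    · by_cases hyx : y = x
      · subst hyx
        by_cases hpseg : y ∈ convexHull ℝ ({p, q} : Set Pt)
        · rw [convexHull_pair] at hpseg
          exact absurd (collinear_of_sign3 p q y hpq (sign3_of_segment p q y hpseg))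
            (hgp p hpS q hqS y hx hpq (fun h => hyp h.symm) (fun h => hyq h.symm))
        · obtain ⟨f, hfa, hfb, hfne⟩ := sepKey p q y hpseg
          refine absurd hytri (clmKey f (p - y) p q y y ?_ hfa hfb le_rfl)
          rw [map_sub]; intro h; exact hfne (by linarith)
      · -- now y ∉ {p, q, x}
        have hyext : ¬ ExtremePt S y := by
          intro hext
          apply hext.2
          have hsub2 : ({p, q, x} : Set Pt) ⊆ ((S.erase y : Finset Pt) : Set Pt) := by
            intro z hz
            rcases hz with rfl | rfl | rfl <;>
              · simp only [Finset.coe_erase, Set.mem_diff, Set.mem_singleton_iff,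
                  Finset.mem_coe]
                constructor
                · assumption
                · intro h; first | exact hyp h.symm | exact hyq h.symm | exact hyx h.symm
          exact convexHull_mono hsub2 (interior_subset hytri)
        obtain ⟨Cy, hCyeq⟩ := Finset.card_eq_one.mp (g.interior_mem y hy hyext)
        have hCymem : Cy ∈ Finset.filter (fun C => y ∈ C) g.chains :=
          hCyeq ▸ Finset.mem_singleton_self Cy
        rw [Finset.mem_filter] at hCymem
        obtain ⟨hCyc, hyCy⟩ := hCymem
        obtain ⟨e1, e2, hchainy⟩ := g.chains_concave Cy hCyc
        obtain ⟨hCysub, he1Cy, he2Cy, he12, he1ext, he2ext, hconvy, -, hlinesy⟩ := hchainy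
        have he1S : e1 ∈ S := hCysub he1Cy
        have he2S : e2 ∈ S := hCysub he2Cy
        have hye1 : y ≠ e1 := fun h => hyext (h ▸ he1ext)
        have hye2 : y ≠ e2 := fun h => hyext (h ▸ he2ext)
        have huniqp : ∀ D ∈ g.chains, p ∈ D → D = C := by
          intro D hD hpD
          obtain ⟨E, hE⟩ := Finset.card_eq_one.mp (g.interior_mem p hpS hpne)
          have hDE : D ∈ ({E} : Finset (Finset Pt)) := hE ▸ Finset.mem_filter.mpr ⟨hD, hpD⟩
          have hCE : C ∈ ({E} : Finset (Finset Pt)) := hE ▸ Finset.mem_filter.mpr ⟨hCmem, hpC⟩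
          rw [Finset.mem_singleton] at hDE hCE
          rw [hDE, hCE]
        have huniqq : ∀ D ∈ g.chains, q ∈ D → D = C := by
          intro D hD hqD
          obtain ⟨E, hE⟩ := Finset.card_eq_one.mp (g.interior_mem q hqS hqne)
          have hDE : D ∈ ({E} : Finset (Finset Pt)) := hE ▸ Finset.mem_filter.mpr ⟨hD, hqD⟩
          have hCE : C ∈ ({E} : Finset (Finset Pt)) := hE ▸ Finset.mem_filter.mpr ⟨hCmem, hqC⟩
          rw [Finset.mem_singleton] at hDE hCE
          rw [hDE, hCE]
        by_cases hyC : y ∈ C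
        · -- y belongs to the chain C of the edge pq
          by_cases hxC : x ∈ C
          · -- convex position contradiction
            apply hconv y hyC
            have hsub3 : ({p, q, x} : Set Pt) ⊆ ((C.erase y : Finset Pt) : Set Pt) := by
              intro z hz
              rcases hz with rfl | rfl | rfl <;>
                · simp only [Finset.coe_erase, Set.mem_diff, Set.mem_singleton_iff,
                    Finset.mem_coe]
                  constructor
                  · assumption
                  · intro h; first | exact hyp h.symm | exact hyq h.symm | exact hyx h.symm
            exact convexHull_mono hsub3 (interior_subset hytri)
          · -- the frontier (hull-edge) argument
            obtain ⟨hx0, hx1, -⟩ := hlines p hpC q hqC hpq x hx hxC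
            have hpp0 : p ≠ p0 := fun h => hpne (h ▸ hp0ext)
            have hqp0 : q ≠ p0 := fun h => hqne (h ▸ hp0ext)
            have hp0S : p0 ∈ S := hCsub hp0C
            have hs0 : sign3 p q p0 ≠ 0 := hgp3 p hpS q hqS p0 hp0S hpq hpp0 hqp0
            have hy0 : sign3 p q y ≠ 0 :=
              hgp3 p hpS q hqS y hy hpq (fun h => hyp h.symm) (fun h => hyq h.symm)
            have hside : 0 ≤ sign3 p q x * sign3 p q y := by
              have hsubset : convexHull ℝ ({p, q, x} : Set Pt) ⊆
                  {z : Pt | 0 ≤ sign3 p q x * sign3 p q z} := by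
                apply convexHull_min ?_ (convex_sign3_halfplane p q _)
                rintro z (rfl | rfl | rfl) <;> simp only [Set.mem_setOf_eq]
                · rw [sign3_left, mul_zero]
                · rw [sign3_self, mul_zero]
                · exact mul_self_nonneg _
              exact hsubset (interior_subset hytri)
            have hyp0 : sign3 p q y * sign3 p q p0 < 0 := by
              rcases hs0.lt_or_gt with h | h <;> rcases hy0.lt_or_gt with h' | h' <;>
                rcases hx0.lt_or_gt with h'' | h'' <;> nlinarith [hx1, hside]
            set m := midpoint ℝ p q with hm
            have hmint : m ∉ interior (convexHull ℝ (C : Set Pt)) :=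
              (hfront (midpoint_mem_segment p q)).2
            have hAS : affineSpan ℝ (C : Set Pt) = ⊤ := by
              have hncol : ¬ Collinear ℝ ({p, q, p0} : Set Pt) :=
                hgp p hpS q hqS p0 hp0S hpq hpp0 hqp0
              have hAI : AffineIndependent ℝ ![p, q, p0] :=
                affineIndependent_iff_not_collinear_set.mpr hncol
              have h3 : affineSpan ℝ (Set.range ![p, q, p0]) = ⊤ := by
                rw [hAI.affineSpan_eq_top_iff_card_eq_finrank_add_one]
                simp [Module.finrank_prod]
              refine top_unique ?_
              rw [← h3]
              apply affineSpan_mono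
              intro z hz
              simp only [Matrix.range_cons, Matrix.range_empty, Set.union_empty,
                Set.union_singleton] at hz
              rcases hz with h | h | h <;>
                first
                  | (subst h; exact Finset.mem_coe.mpr hp0C)
                  | (subst h; exact Finset.mem_coe.mpr hpC)
                  | (subst h; exact Finset.mem_coe.mpr hqC)

            have hint : (interior (convexHull ℝ (C : Set Pt))).Nonempty := by
              rw [Convex.interior_nonempty_iff_affineSpan_eq_top (convex_convexHull ℝ _),
                affineSpan_convexHull]
              exact hAS
            obtain ⟨a0, ha0⟩ := hint
            obtain ⟨f, hf⟩ := geometric_hahn_banach_open_point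
              (convex_convexHull ℝ (C : Set Pt)).interior isOpen_interior hmint
            have ha0m : f a0 < f m := hf a0 ha0
            have hle : ∀ z ∈ convexHull ℝ (C : Set Pt), f z ≤ f m := by
              intro z hz
              by_contra hgt
              push_neg at hgt
              have hd : 0 < f z - f a0 := by linarith
              set t0 : ℝ := (f m - f a0) / (f z - f a0) with ht0
              have ht01 : t0 < 1 := by rw [ht0, div_lt_one hd]; linarith
              have ht00 : 0 < t0 := div_pos (by linarith) hd
              set t : ℝ := (t0 + 1) / 2 with ht
              have hw : (1 - t) • a0 + t • z ∈ openSegment ℝ a0 z :=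
                ⟨1 - t, t, by simp [ht]; linarith, by simp [ht]; linarith, by ring, rfl⟩
              have hwi := (convex_convexHull ℝ (C : Set Pt)).openSegment_interior_closure_subset_interior
                ha0 (subset_closure hz) hw
              have hlt := hf _ hwi
              rw [map_add, map_smul, map_smul] at hlt
              simp only [smul_eq_mul] at hlt
              have heq : f m - f a0 = t0 * (f z - f a0) := by
                rw [ht0]; field_simp
              nlinarith
            have hfp : f p ≤ f m := hle p (subset_convexHull ℝ _ (Finset.mem_coe.mpr hpC))
            have hfq : f q ≤ f m := hle q (subset_convexHull ℝ _ (Finset.mem_coe.mpr hqC))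
            have hfy : f y ≤ f m := hle y (subset_convexHull ℝ _ (Finset.mem_coe.mpr hyC))
            have hfp0 : f p0 ≤ f m := hle p0 (subset_convexHull ℝ _ (Finset.mem_coe.mpr hp0C))
            have hfm : f m = (f p + f q) / 2 := by
              rw [hm, midpoint_eq_smul_add, map_smul, map_add]
              simp [smul_eq_mul]
              ring
            have hfpm : f p = f m := by linarith
            have hfqm : f q = f m := by linarith
            set c1 : ℝ := f (1, 0) with hc1d
            set c2 : ℝ := f (0, 1) with hc2d
            have hd0 : c1 * (q.1 - p.1) + c2 * (q.2 - p.2) = 0 := by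
              have h1 := clm_rep f q
              have h2 := clm_rep f p
              rw [← hc1d, ← hc2d] at h1 h2
              have : f q = f p := by linarith
              rw [h1, h2] at this
              linarith
            have hFy : c1 * (y.1 - p.1) + c2 * (y.2 - p.2) ≤ 0 := by
              have h1 := clm_rep f y
              have h2 := clm_rep f p
              rw [← hc1d, ← hc2d] at h1 h2
              have : f y ≤ f p := by linarith
              rw [h1, h2] at this
              linarith
            have hFp0 : c1 * (p0.1 - p.1) + c2 * (p0.2 - p.2) ≤ 0 := by
              have h1 := clm_rep f p0
              have h2 := clm_rep f p
              rw [← hc1d, ← hc2d] at h1 h2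
              have : f p0 ≤ f p := by linarith
              rw [h1, h2] at this
              linarith
            have hkey : (c1 * (y.1 - p.1) + c2 * (y.2 - p.2)) * sign3 p q p0
                = (c1 * (p0.1 - p.1) + c2 * (p0.2 - p.2)) * sign3 p q y := by
              simp only [sign3]
              linear_combination ((y.1 - p.1) * (p0.2 - p.2) - (y.2 - p.2) * (p0.1 - p.1)) * hd0
            have hFy0 : c1 * (y.1 - p.1) + c2 * (y.2 - p.2) = 0 := by
              rcases mul_neg_iff.mp hyp0 with ⟨h1, h2⟩ | ⟨h1, h2⟩ <;>
                nlinarith [hkey, hFy, hFp0]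
            have hc10 : c1 = 0 := by
              have h1 : c1 * sign3 p q y = 0 := by
                simp only [sign3]
                linear_combination (y.2 - p.2) * hd0 - (q.2 - p.2) * hFy0
              rcases mul_eq_zero.mp h1 with h | h
              · exact h
              · exact absurd h hy0
            have hc20 : c2 = 0 := by
              have h1 : c2 * sign3 p q y = 0 := by
                simp only [sign3]
                linear_combination (q.1 - p.1) * hFy0 - (y.1 - p.1) * hd0
              rcases mul_eq_zero.mp h1 with h | h
              · exact h
              · exact absurd h hy0
            have : f a0 = f m := by
              rw [clm_rep f a0, clm_rep f m, ← hc1d, ← hc2d, hc10, hc20]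
              ring
            exact absurd ha0m (by rw [this]; exact lt_irrefl _)
        · -- y is not in C, hence p, q are not in Cy
          have hpCy : p ∉ Cy := fun h => hyC (huniqp Cy hCyc h ▸ hyCy)
          have hqCy : q ∉ Cy := fun h => hyC (huniqq Cy hCyc h ▸ hyCy)
          by_cases hxCy : x ∈ Cy
          · have hxy : x ≠ y := fun h => hyx h.symm
            obtain ⟨hP0, hP1, hP2⟩ := hlinesy y hyCy x hxCy (fun h => hxy h.symm) p hpS hpCy
            obtain ⟨hQ0, hQ1, hQ2⟩ := hlinesy y hyCy x hxCy (fun h => hxy h.symm) q hqS hqCy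
            by_cases hxe1 : x = e1
            · have hs : sign3 y x e2 ≠ 0 :=
                hgp3 y hy x (hCysub hxCy) e2 he2S (fun h => hxy h.symm) hye2
                  (by rw [hxe1]; exact he12)
              refine absurd hytri (triKey p q x y x (sign3 y x e2) hs hxy ?_ ?_ ?_)
              · nlinarith [hP2]
              · nlinarith [hQ2]
              · rw [sign3_self, mul_zero]
            · have hs : sign3 y x e1 ≠ 0 :=
                hgp3 y hy x (hCysub hxCy) e1 he1S (fun h => hxy h.symm) hye1 hxe1
              refine absurd hytri (triKey p q x y x (sign3 y x e1) hs hxy ?_ ?_ ?_)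
              · nlinarith [hP1]
              · nlinarith [hQ1]
              · rw [sign3_self, mul_zero]
          · have hs : sign3 y e1 e2 ≠ 0 := hgp3 y hy e1 he1S e2 he2S hye1 hye2 he12
            obtain ⟨-, -, hP⟩ := hlinesy y hyCy e1 he1Cy hye1 p hpS hpCy
            obtain ⟨-, -, hQ⟩ := hlinesy y hyCy e1 he1Cy hye1 q hqS hqCy
            obtain ⟨-, -, hX⟩ := hlinesy y hyCy e1 he1Cy hye1 x hx hxCy
            refine absurd hytri (triKey p q x y e1 (sign3 y e1 e2) hs (fun h => hye1 h.symm)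
              ?_ ?_ ?_)
            · nlinarith [hP]
            · nlinarith [hQ]
            · nlinarith [hX]
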